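/- Let n ≥ 1 and write its binary expansion as n = Σ_{j=1}^ℓ 2^{m_j} with m_1 > m_2 > ... > m_ℓ ≥ 0. Then c(n) = Σ_{j=2}^ℓ 2^{m_j} · (m_1 − m_j − 2(j−2)), where the sum is computed in the integers. -/
import Mathlib

/-- The Colless index of the maximally balanced bifurcating tree with `n` leaves:
`c 1 = 0` and `c n = c ⌈n/2⌉ + c ⌊n/2⌋ + (⌈n/2⌉ - ⌊n/2⌋)` for `n ≥ 2`. -/
def c : ℕ → ℕ
  | 0 => 0
  | 1 => 0
  | n + 2 => c ((n + 3) / 2) + c ((n + 2) / 2) + ((n + 3) / 2 - (n + 2) / 2)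
decreasing_by all_goals omega

lemma c_one : c 1 = 0 := by rw [c]

lemma c_even (k : ℕ) (hk : 1 ≤ k) : c (2 * k) = 2 * c k := by
  obtain ⟨j, rfl⟩ := Nat.exists_eq_add_of_le hk
  rw [show 1 + j = j + 1 from by ring, show 2 * (j + 1) = j * 2 + 2 from by ring, c,
    show (j * 2 + 3) / 2 = j + 1 from by omega, show (j * 2 + 2) / 2 = j + 1 from by omega]
  omega

lemma c_odd (k : ℕ) (hk : 1 ≤ k) : c (2 * k + 1) = c (k + 1) + c k + 1 := by
  obtain ⟨j, rfl⟩ := Nat.exists_eq_add_of_le hk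
  rw [show 1 + j = j + 1 from by ring, show 2 * (j + 1) + 1 = (j * 2 + 1) + 2 from by ring, c,
    show (j * 2 + 1 + 3) / 2 = j + 1 + 1 from by omega,
    show (j * 2 + 1 + 2) / 2 = j + 1 from by omega]
  omega

lemma c_pow (a : ℕ) : c (2 ^ a) = 0 := by
  induction a with
  | zero => exact c_one
  | succ a ih => rw [pow_succ, mul_comm, c_even _ Nat.one_le_two_pow, ih]

lemma cA : ∀ a s : ℕ, 1 ≤ s → s ≤ 2 ^ a →
    (c (2 ^ a + s) : ℤ) = (c s : ℤ) + (s : ℤ) * ((a : ℤ) - (Nat.log 2 s : ℤ) - 2)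
      + 2 ^ (Nat.log 2 s + 1) := by
  intro a
  induction a with
  | zero =>
    intro s hs1 hs2
    interval_cases s
    have h2 : c 2 = 0 := by rw [show 2 = 2 * 1 from rfl, c_even 1 le_rfl, c_one]
    simp [h2, c_one]
  | succ a IH =>
    intro s hs1 hs2
    rcases Nat.even_or_odd s with ⟨t, rfl⟩ | ⟨t, rfl⟩
    · -- s = 2t
      have ht1 : 1 ≤ t := by omega
      have ht2 : t ≤ 2 ^ a := by have := pow_succ 2 a; omega
      have ih := IH t ht1 ht2
      have hl : Nat.log 2 (t + t) = Nat.log 2 t + 1 := by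
        rw [show t + t = t * 2 from by ring]
        exact Nat.log_mul_base one_lt_two (by omega)
      have hE : c (2 ^ (a + 1) + (t + t)) = 2 * c (2 ^ a + t) := by
        rw [show 2 ^ (a + 1) + (t + t) = 2 * (2 ^ a + t) from by ring]
        exact c_even _ (by have : 1 ≤ 2 ^ a := Nat.one_le_two_pow; omega)
      have hct : c (t + t) = 2 * c t := by
        rw [show t + t = 2 * t from by ring]; exact c_even t ht1
      rw [hE, hl, hct]
      push_cast
      linear_combination 2 * ih
    · -- s = 2t+1
      rcases Nat.eq_zero_or_pos t with rfl | ht1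
    
      · -- s = 1
        simp only [Nat.zero_add, mul_zero, zero_add] at *
        have hE : c (2 ^ (a + 1) + 1) = c (2 ^ a + 1) + c (2 ^ a) + 1 := by
          rw [show 2 ^ (a + 1) + 1 = 2 * 2 ^ a + 1 from by ring]
          exact c_odd _ Nat.one_le_two_pow
        have ih := IH 1 le_rfl Nat.one_le_two_pow
        rw [hE]
        simp only [Nat.log_one_right, c_pow, c_one] at *
        push_cast at *
        linear_combination ih
      · have hs2' : 2 * t + 1 ≤ 2 ^ (a + 1) := by omega
        have ht2 : t ≤ 2 ^ a := by have := pow_succ 2 a; omega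
        have ht3 : t + 1 ≤ 2 ^ a := by have := pow_succ 2 a; omega
        have ih1 := IH (t + 1) (by omega) ht3
        have ih2 := IH t ht1 ht2
        set u := Nat.log 2 t with hu
        have hu1 : 2 ^ u ≤ t := Nat.pow_log_le_self 2 (by omega)
        have hu2 : t < 2 ^ (u + 1) := Nat.lt_pow_succ_log_self one_lt_two t
        have hls : Nat.log 2 (2 * t + 1) = u + 1 := by
          apply Nat.log_eq_of_pow_le_of_lt_pow
          · rw [pow_succ]; omega
          · rw [pow_succ, pow_succ]; omega
        have hE : c (2 ^ (a + 1) + (2 * t + 1)) = c (2 ^ a + t + 1) + c (2 ^ a + t) + 1 := by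
          rw [show 2 ^ (a + 1) + (2 * t + 1) = 2 * (2 ^ a + t) + 1 from by ring,
            c_odd _ (by have : 1 ≤ 2 ^ a := Nat.one_le_two_pow; omega)]
        have hcs : c (2 * t + 1) = c (t + 1) + c t + 1 := c_odd t ht1
        rw [hE, hcs, hls, show 2 ^ a + t + 1 = 2 ^ a + (t + 1) from by ring]
        rcases lt_or_eq_of_le (show t + 1 ≤ 2 ^ (u + 1) from hu2) with h | h
        · have hl1 : Nat.log 2 (t + 1) = u :=
            Nat.log_eq_of_pow_le_of_lt_pow (by omega) h
          rw [hl1] at ih1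
          push_cast at *
          linear_combination ih1 + ih2
        · have hl1 : Nat.log 2 (t + 1) = u + 1 := by rw [h, Nat.log_pow one_lt_two]
          rw [hl1] at ih1
          have hpow : (t : ℤ) + 1 = 2 ^ (u + 1) := by exact_mod_cast h
          push_cast at *
          linear_combination ih1 + ih2 - hpow

open Finset in
lemma sum_pow_lt : ∀ d k (m : ℕ → ℕ), (∀ i j, k ≤ i → i < j → j ≤ k + d → m j < m i) →
    ∑ j ∈ Icc k (k + d), 2 ^ m j < 2 ^ (m k + 1) := by
  intro d
  induction d with
  | zero => intro k m _; simp [pow_succ]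
  | succ d ih =>
    intro k m hm
    have hsplit : Icc k (k + (d + 1)) = insert k (Icc (k + 1) (k + 1 + d)) := by
      ext x; simp only [mem_Icc, mem_insert]; omega
    rw [hsplit, Finset.sum_insert (by simp only [mem_Icc]; omega)]
    have h1 := ih (k + 1) m (fun i j hi hij hj => hm i j (by omega) hij (by omega))
    have h2 : m (k + 1) < m k := hm k (k + 1) le_rfl (by omega) (by omega)
    have h3 : 2 ^ (m (k + 1) + 1) ≤ 2 ^ m k := Nat.pow_le_pow_right (by omega) (by omega)
    rw [pow_succ]
    omega

open Finset in
lemma main_aux : ∀ ℓ, 1 ≤ ℓ → ∀ m : ℕ → ℕ, (∀ i j, 1 ≤ i → i < j → j ≤ ℓ → m j < m i) →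
    (c (∑ j ∈ Icc 1 ℓ, 2 ^ m j) : ℤ) =
      ∑ j ∈ Icc 2 ℓ, (2 : ℤ) ^ m j * ((m 1 : ℤ) - (m j : ℤ) - 2 * ((j : ℤ) - 2)) := by
  intro ℓ
  induction ℓ with
  | zero => omega
  | succ L IH =>
    intro _ m hm
    rcases Nat.eq_zero_or_pos L with rfl | hL
    · simp [c_pow]
    -- inductive step
    have ih := IH hL (fun j => m (j + 1))
      (fun i j hi hij hj => hm (i + 1) (j + 1) (by omega) (by omega) (by omega))
    -- reindexing lemma
    have hre : ∀ f : ℕ → ℤ, ∑ j ∈ Icc 2 (L + 1), f j = ∑ j ∈ Icc 1 L, f (j + 1) := by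
      intro f
      rw [show Icc 2 (L + 1) = (Icc 1 L).map (addRightEmbedding 1) from by
        rw [Finset.map_add_right_Icc], Finset.sum_map]
      rfl
    have hreN : ∀ f : ℕ → ℕ, ∑ j ∈ Icc 2 (L + 1), f j = ∑ j ∈ Icc 1 L, f (j + 1) := by
      intro f
      rw [show Icc 2 (L + 1) = (Icc 1 L).map (addRightEmbedding 1) from by
        rw [Finset.map_add_right_Icc], Finset.sum_map]
      rfl
    have hre3 : ∀ f : ℕ → ℤ, ∑ j ∈ Icc 3 (L + 1), f j = ∑ j ∈ Icc 2 L, f (j + 1) := by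
      intro f
      rw [show Icc 3 (L + 1) = (Icc 2 L).map (addRightEmbedding 1) from by
        rw [Finset.map_add_right_Icc], Finset.sum_map]
      rfl
    -- s and its bounds
    set s : ℕ := ∑ j ∈ Icc 2 (L + 1), 2 ^ m j with hs
    have hsplitN : ∑ j ∈ Icc 1 (L + 1), 2 ^ m j = 2 ^ m 1 + s := by
      rw [hs, show Icc 1 (L + 1) = insert 1 (Icc 2 (L + 1)) from by
        ext x; simp only [mem_Icc, mem_insert]; omega,
        Finset.sum_insert (by simp only [mem_Icc]; omega)]
    have hslt : s < 2 ^ (m 2 + 1) := by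
      rw [hs, show L + 1 = 2 + (L - 1) from by omega]
      exact sum_pow_lt (L - 1) 2 m (fun i j hi hij hj => hm i j (by omega) hij (by omega))
    have hsge : 2 ^ m 2 ≤ s := by
      rw [hs]
      exact Finset.single_le_sum (f := fun j => 2 ^ m j) (fun i _ => Nat.zero_le _)
        (by simp only [mem_Icc]; omega)
    have hm21 : m 2 < m 1 := hm 1 2 le_rfl (by omega) (by omega)
    have hs1 : 1 ≤ s := le_trans Nat.one_le_two_pow hsge
    have hs2 : s ≤ 2 ^ m 1 := by
      exact le_of_lt (lt_of_lt_of_le hslt (Nat.pow_le_pow_right (by omega) (by omega)))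
    have hlog : Nat.log 2 s = m 2 := Nat.log_eq_of_pow_le_of_lt_pow hsge hslt
    have hca := cA (m 1) s hs1 hs2
    rw [hlog] at hca
    -- rewrite ih's argument to s
    rw [show ∑ j ∈ Icc 1 L, 2 ^ m (j + 1) = s from (hreN (fun j => 2 ^ m j)).symm] at ih
    rw [hsplitN, hca, ih]
    -- now pure sum algebra
    have hsplitZ : ∀ f : ℕ → ℤ, ∑ j ∈ Icc 2 (L + 1), f j = f 2 + ∑ j ∈ Icc 3 (L + 1), f j := by
      intro f
      rw [show Icc 2 (L + 1) = insert 2 (Icc 3 (L + 1)) from by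
        ext x; simp only [mem_Icc, mem_insert]; omega,
        Finset.sum_insert (by simp only [mem_Icc]; omega)]
    rw [hsplitZ, hre3]
    have hsZ : (s : ℤ) = 2 ^ m 2 + ∑ j ∈ Icc 2 L, (2 : ℤ) ^ m (j + 1) := by
      rw [hs]; push_cast [hsplitZ (fun j => (2 : ℤ) ^ m j), hre3]
      norm_num
    rw [hsZ]
    have key : ∑ j ∈ Icc 2 L, (2 : ℤ) ^ m (j + 1) *
          ((m 1 : ℤ) - (m (j + 1) : ℤ) - 2 * (((j : ℕ) + 1 : ℤ) - 2)) =
        (∑ j ∈ Icc 2 L, (2 : ℤ) ^ m (j + 1) * ((m 2 : ℤ) - (m (j + 1) : ℤ) - 2 * ((j : ℤ) - 2)))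
        + (∑ j ∈ Icc 2 L, (2 : ℤ) ^ m (j + 1)) * ((m 1 : ℤ) - (m 2 : ℤ) - 2) := by
      rw [Finset.sum_mul, ← Finset.sum_add_distrib]
      apply Finset.sum_congr rfl
      intro j hj
      ring
    push_cast at key ⊢
    linear_combination -key


/-- If `n = Σ_{j=1}^ℓ 2^(m j)` with `m 1 > m 2 > ⋯ > m ℓ ≥ 0`, then
`c n = Σ_{j=2}^ℓ 2^(m j) * (m 1 - m j - 2*(j-2))`, computed in `ℤ`. -/
theorem minColless_closed_formula (ℓ : ℕ) (hℓ : 1 ≤ ℓ) (m : ℕ → ℕ)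
    (hm : ∀ i j, 1 ≤ i → i < j → j ≤ ℓ → m j < m i)
    (n : ℕ) (hn : n = ∑ j ∈ Finset.Icc 1 ℓ, 2 ^ m j) :
    (c n : ℤ) =
      ∑ j ∈ Finset.Icc 2 ℓ, (2 : ℤ) ^ m j * ((m 1 : ℤ) - (m j : ℤ) - 2 * ((j : ℤ) - 2)) := by
  subst hn
  exact main_aux ℓ hℓ m hm
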